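/- arXiv:1410.5527 — 9 statements merged into one kernel-verified Lean document; each statement's English description precedes it below -/
import Mathlib

section
/- Let φ : ℝ → ℝ be continuously differentiable. Then lim_{ε→0⁺} ∫₀^{1/2} f_ε(x) (φ(x) − φ(0)) dx = 0, where f_ε(x) = b_ε/(x(1−x)+ε) with b_ε = c⁺(ε)/ln((c⁺(ε)+1/2)/(c⁺(ε)−1/2)) and c⁺(ε) = √(1/4 + ε). -/
open MeasureTheory Topology Filter

/-- `c⁺(ε) = √(1/4 + ε)`. -/
noncomputable def cplus (ε : ℝ) : ℝ := Real.sqrt (1/4 + ε)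

/-- The normalization constant `b_ε = c⁺(ε)/log((c⁺(ε)+1/2)/(c⁺(ε)−1/2))`. -/
noncomputable def bconst (ε : ℝ) : ℝ :=
  cplus ε / Real.log ((cplus ε + 1/2) / (cplus ε - 1/2))

/-- The viscous steady state `f_ε(x) = b_ε/(x(1−x)+ε)`. -/
noncomputable def fvisc (ε x : ℝ) : ℝ := bconst ε / (x * (1 - x) + ε)

/-!
Since `x(1−x) + ε ≥ x/2` on `[0, 1/2]` and `|φ(x) − φ(0)| ≤ K x` there, the integrand is bounded
by `2K|b_ε|`, so the integral is at most `K|b_ε|`. Finally `b_ε → 0`: as `c⁺(ε) ↓ 1/2`, the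
logarithm in the denominator of `b_ε` blows up.
-/

lemma half_lt_cplus {ε : ℝ} (hε : 0 < ε) : 1/2 < cplus ε := by
  rw [cplus, Real.lt_sqrt (by norm_num)]
  linarith

lemma tendsto_cplus_nhdsGT_zero : Tendsto cplus (𝓝[>] 0) (𝓝 (1/2)) := by
  have h : Tendsto cplus (𝓝 0) (𝓝 (Real.sqrt (1/4 + 0))) :=
    ((continuous_const.add continuous_id).sqrt).tendsto 0
  rw [add_zero, show (1/4 : ℝ) = (1/2)^2 by norm_num, Real.sqrt_sq (by norm_num)] at h
  exact h.mono_left nhdsWithin_le_nhds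

lemma tendsto_cplus_sub_half_nhdsGT_zero :
    Tendsto (fun ε => cplus ε - 1/2) (𝓝[>] 0) (𝓝[>] 0) := by
  refine tendsto_nhdsWithin_iff.2 ⟨?_, ?_⟩
  · simpa using tendsto_cplus_nhdsGT_zero.sub_const (1/2 : ℝ)
  · filter_upwards [self_mem_nhdsWithin] with ε hε
    exact sub_pos.2 (half_lt_cplus hε)

lemma tendsto_log_cplus_ratio_atTop :
    Tendsto (fun ε => Real.log ((cplus ε + 1/2) / (cplus ε - 1/2))) (𝓝[>] 0) atTop := by
  refine Real.tendsto_log_atTop.comp ?_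
  have ratio_eq : ∀ᶠ ε in 𝓝[>] (0 : ℝ),
      1 + (cplus ε - 1/2)⁻¹ = (cplus ε + 1/2) / (cplus ε - 1/2) := by
    filter_upwards [self_mem_nhdsWithin] with ε hε
    have hne : cplus ε - 1/2 ≠ 0 := (sub_pos.2 (half_lt_cplus hε)).ne'
    rw [eq_div_iff hne, add_mul, one_mul, inv_mul_cancel₀ hne]
    ring
  exact (tendsto_atTop_add_const_left _ 1
    (tendsto_inv_nhdsGT_zero.comp tendsto_cplus_sub_half_nhdsGT_zero)).congr' ratio_eq

lemma tendsto_bconst_nhdsGT_zero : Tendsto bconst (𝓝[>] 0) (𝓝 0) := by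
  have h := tendsto_cplus_nhdsGT_zero.mul tendsto_log_cplus_ratio_atTop.inv_tendsto_atTop
  rw [mul_zero] at h
  exact h.congr fun ε => (div_eq_mul_inv _ _).symm

lemma abs_fvisc_mul_le {ε x : ℝ} (hε : 0 ≤ ε) (hx : 0 < x) (hx' : x ≤ 1/2) :
    |fvisc ε x| * x ≤ 2 * |bconst ε| := by
  have hden : x / 2 ≤ x * (1 - x) + ε := by nlinarith
  have hden_pos : 0 < x * (1 - x) + ε := by linarith
  rw [fvisc, abs_div, abs_of_pos hden_pos, div_mul_eq_mul_div, div_le_iff₀ hden_pos]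
  nlinarith [abs_nonneg (bconst ε)]

lemma norm_integral_fvisc_mul_le {ψ : ℝ → ℝ} {K ε : ℝ} (hε : 0 ≤ ε)
    (hψ : ∀ x ∈ Set.Ioc (0 : ℝ) (1/2), |ψ x| ≤ K * x) :
    ‖∫ x in (0 : ℝ)..(1/2), fvisc ε x * ψ x‖ ≤ K * |bconst ε| := by
  have bound : ∀ x ∈ Set.uIoc (0 : ℝ) (1/2), ‖fvisc ε x * ψ x‖ ≤ 2 * K * |bconst ε| := by
    intro x hx
    rw [Set.uIoc_of_le (by norm_num)] at hx
    have hK : 0 ≤ K := by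
      have := (abs_nonneg (ψ x)).trans (hψ x hx)
      exact nonneg_of_mul_nonneg_left this hx.1
    calc ‖fvisc ε x * ψ x‖ = |fvisc ε x| * |ψ x| := abs_mul _ _
      _ ≤ |fvisc ε x| * (K * x) := by gcongr; exact hψ x hx
      _ = K * (|fvisc ε x| * x) := by ring
      _ ≤ K * (2 * |bconst ε|) := mul_le_mul_of_nonneg_left (abs_fvisc_mul_le hε hx.1 hx.2) hK
      _ = 2 * K * |bconst ε| := by ring
  calc ‖∫ x in (0 : ℝ)..(1/2), fvisc ε x * ψ x‖ ≤ 2 * K * |bconst ε| * |(1/2 : ℝ) - 0| :=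
        intervalIntegral.norm_integral_le_of_norm_le_const bound
    _ = K * |bconst ε| := by norm_num; ring

lemma ContDiff.exists_abs_sub_le_mul {φ : ℝ → ℝ} (hφ : ContDiff ℝ 1 φ) (a b : ℝ) :
    ∃ K : ℝ, ∀ x ∈ Set.Icc a b, |φ x - φ a| ≤ K * (x - a) := by
  obtain ⟨K, hK⟩ := hφ.locallyLipschitz.locallyLipschitzOn.exists_lipschitzOnWith_of_compact
    (isCompact_Icc (a := a) (b := b))
  refine ⟨K, fun x hx => ?_⟩
  have h := hK.dist_le_mul x hx a (Set.left_mem_Icc.2 (hx.1.trans hx.2))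
  rwa [Real.dist_eq, Real.dist_eq, abs_of_nonneg (sub_nonneg.2 hx.1)] at h

/-- For `φ` continuously differentiable,
`lim_{ε→0⁺} ∫₀^{1/2} f_ε(x)(φ(x) − φ(0)) dx = 0`. -/
theorem tendsto_integral_fvisc_sub_left (φ : ℝ → ℝ) (hφ : ContDiff ℝ 1 φ) :
    Tendsto (fun ε : ℝ => ∫ x in (0:ℝ)..(1/2), fvisc ε x * (φ x - φ 0))
      (𝓝[>] (0:ℝ)) (𝓝 0) := by
  obtain ⟨K, hK⟩ := hφ.exists_abs_sub_le_mul 0 (1/2)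
  have hψ : ∀ x ∈ Set.Ioc (0 : ℝ) (1/2), |φ x - φ 0| ≤ K * x := fun x hx => by
    simpa using hK x (Set.Ioc_subset_Icc_self hx)
  refine squeeze_zero_norm' ?_ (by simpa using tendsto_bconst_nhdsGT_zero.abs.const_mul K)
  filter_upwards [self_mem_nhdsWithin] with ε hε
  exact norm_integral_fvisc_mul_le (le_of_lt hε) hψ
end

section
/- Extend f_ε by zero outside [0,1], i.e. let f̃_ε(x) = b_ε/(x(1−x)+ε) for x ∈ [0,1] and f̃_ε(x) = 0 otherwise, where b_ε = c⁺(ε)/ln((c⁺(ε)+1/2)/(c⁺(ε)−1/2)) and c⁺(ε) = √(1/4 + ε). Then for every smooth compactly supported test function φ : ℝ → ℝ, lim_{ε→0⁺} ∫_ℝ f̃_ε(x) φ(x) dx = (1/2)φ(0) + (1/2)φ(1). In other words, f̃_ε converges to (1/2)δ(x) + (1/2)δ(x−1) in the sense of distributions. -/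
open MeasureTheory Topology Filter

/-- The viscous steady state extended by zero outside `[0,1]`:
`f̃_ε(x) = b_ε/(x(1−x)+ε)` for `x ∈ [0,1]`, `0` otherwise. -/
noncomputable def fviscExt (ε x : ℝ) : ℝ :=
  if x ∈ Set.Icc (0:ℝ) 1 then bconst ε / (x * (1 - x) + ε) else 0

noncomputable def Lc (ε : ℝ) : ℝ := Real.log ((cplus ε + 1/2) / (cplus ε - 1/2))

lemma cplus_sq {ε : ℝ} (hε : 0 < ε) : cplus ε ^ 2 = 1/4 + ε :=
  Real.sq_sqrt (by linarith)

lemma Lc_pos {ε : ℝ} (hε : 0 < ε) : 0 < Lc ε := by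
  have h := half_lt_cplus hε
  apply Real.log_pos
  rw [lt_div_iff₀ (by linarith)]
  linarith

lemma bconst_eq (ε : ℝ) : bconst ε = cplus ε / Lc ε := rfl

lemma bconst_pos {ε : ℝ} (hε : 0 < ε) : 0 < bconst ε := by
  have h := half_lt_cplus hε
  exact div_pos (by linarith) (Lc_pos hε)

lemma Lc_eq {ε : ℝ} (hε : 0 < ε) :
    Lc ε = Real.log (cplus ε + 1/2) - Real.log (cplus ε - 1/2) := by
  have h := half_lt_cplus hε
  rw [Lc, Real.log_div (by linarith) (by linarith)]

lemma hasDerivAt_F {ε : ℝ} (hε : 0 < ε) {x : ℝ} (hx : x ∈ Set.Icc (0:ℝ) 1) :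
    HasDerivAt (fun y => (1/(2*cplus ε)) *
        (Real.log (cplus ε + y - 1/2) - Real.log (cplus ε - y + 1/2)))
      (1/(x*(1-x)+ε)) x := by
  set c := cplus ε with hc_def
  have hc := half_lt_cplus hε
  obtain ⟨hx0, hx1⟩ := hx
  have h1 : 0 < c + x - 1/2 := by linarith
  have h2 : 0 < c - x + 1/2 := by linarith
  have hu : HasDerivAt (fun y : ℝ => c + y - 1/2) 1 x := by
    simpa using ((hasDerivAt_id x).const_add c).sub_const (1/2)
  have hv : HasDerivAt (fun y : ℝ => c - y + 1/2) (-1) x := by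
    simpa using ((hasDerivAt_id x).const_sub c).add_const (1/2)
  have hlu := hu.log h1.ne'
  have hlv := hv.log h2.ne'
  have H := (hlu.sub hlv).const_mul (1/(2*c))
  refine H.congr_deriv ?_; symm
  have hcsq : c^2 = 1/4 + ε := cplus_sq hε
  have hden : x*(1-x)+ε = (c + x - 1/2)*(c - x + 1/2) := by nlinarith
  have hc0 : c ≠ 0 := by linarith
  rw [hden, div_sub_div _ _ h1.ne' h2.ne']
  have h3 : (1*(c-x+1/2) - (c+x-1/2)*(-1)) = 2*c := by ring
  rw [h3]
  rw [div_mul_div_comm, one_mul]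
  have hp : (0:ℝ) < (c + x - 1/2) * (c - x + 1/2) := mul_pos h1 h2
  rw [div_eq_div_iff hp.ne' (by positivity : (0:ℝ) < 2*c*((c + x - 1/2) * (c - x + 1/2))).ne']
  ring

lemma den_pos {ε : ℝ} (hε : 0 < ε) {x : ℝ} (hx : x ∈ Set.Icc (0:ℝ) 1) :
    0 < x*(1-x) + ε := by
  obtain ⟨h0, h1⟩ := hx
  nlinarith

lemma intInt {ε : ℝ} (hε : 0 < ε) {a b : ℝ} (hab : Set.uIcc a b ⊆ Set.Icc (0:ℝ) 1)
    (ψ : ℝ → ℝ) (hψ : Continuous ψ) :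
    IntervalIntegrable (fun x => bconst ε/(x*(1-x)+ε) * ψ x) volume a b := by
  apply ContinuousOn.intervalIntegrable
  apply ContinuousOn.mul _ hψ.continuousOn
  apply ContinuousOn.div continuousOn_const (by fun_prop)
  intro x hx
  exact (den_pos hε (hab hx)).ne'

lemma integral_oneDiv {ε : ℝ} (hε : 0 < ε) {a b : ℝ} (hab : Set.uIcc a b ⊆ Set.Icc (0:ℝ) 1) :
    ∫ x in a..b, 1/(x*(1-x)+ε) =
      (1/(2*cplus ε)) * (Real.log (cplus ε + b - 1/2) - Real.log (cplus ε - b + 1/2))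
      - (1/(2*cplus ε)) * (Real.log (cplus ε + a - 1/2) - Real.log (cplus ε - a + 1/2)) := by
  apply intervalIntegral.integral_eq_sub_of_hasDerivAt (fun x hx => hasDerivAt_F hε (hab hx))
  apply ContinuousOn.intervalIntegrable
  apply ContinuousOn.div continuousOn_const (by fun_prop)
  intro x hx
  exact (den_pos hε (hab hx)).ne'

lemma integral_left {ε : ℝ} (hε : 0 < ε) :
    ∫ x in (0:ℝ)..(1/2), bconst ε/(x*(1-x)+ε) = 1/2 := by
  have hc := half_lt_cplus hε
  have hsub : Set.uIcc (0:ℝ) (1/2) ⊆ Set.Icc (0:ℝ) 1 := by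
    rw [Set.uIcc_of_le (by norm_num)]
    exact Set.Icc_subset_Icc le_rfl (by norm_num)
  have key := integral_oneDiv hε hsub
  have hval : ∫ x in (0:ℝ)..(1/2), 1/(x*(1-x)+ε) = Lc ε / (2*cplus ε) := by
    rw [key, Lc_eq hε]
    norm_num
    ring
  have : ∫ x in (0:ℝ)..(1/2), bconst ε/(x*(1-x)+ε)
      = bconst ε * ∫ x in (0:ℝ)..(1/2), 1/(x*(1-x)+ε) := by
    rw [← intervalIntegral.integral_const_mul]
    congr 1; ext x; ring
  rw [this, hval, bconst_eq]
  have hL := Lc_pos hε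
  field_simp

lemma integral_right {ε : ℝ} (hε : 0 < ε) :
    ∫ x in (1/2:ℝ)..1, bconst ε/(x*(1-x)+ε) = 1/2 := by
  have hc := half_lt_cplus hε
  have hsub : Set.uIcc (1/2:ℝ) 1 ⊆ Set.Icc (0:ℝ) 1 := by
    rw [Set.uIcc_of_le (by norm_num)]
    exact Set.Icc_subset_Icc (by norm_num) le_rfl
  have key := integral_oneDiv hε hsub
  have hval : ∫ x in (1/2:ℝ)..1, 1/(x*(1-x)+ε) = Lc ε / (2*cplus ε) := by
    rw [key, Lc_eq hε]
    norm_num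
    ring
  have : ∫ x in (1/2:ℝ)..1, bconst ε/(x*(1-x)+ε)
      = bconst ε * ∫ x in (1/2:ℝ)..1, 1/(x*(1-x)+ε) := by
    rw [← intervalIntegral.integral_const_mul]
    congr 1; ext x; ring
  rw [this, hval, bconst_eq]
  have hL := Lc_pos hε
  field_simp

lemma tendsto_cplus : Tendsto cplus (𝓝[>] (0:ℝ)) (𝓝 (1/2)) := by
  have hcont : Continuous cplus := by
    unfold cplus; fun_prop
  have := hcont.tendsto 0
  rw [show cplus 0 = 1/2 by
    rw [cplus, show (1:ℝ)/4 + 0 = (1/2)^2 by norm_num, Real.sqrt_sq (by norm_num)]] at this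
  exact this.mono_left nhdsWithin_le_nhds

lemma tendsto_bconst : Tendsto bconst (𝓝[>] (0:ℝ)) (𝓝 0) := by
  have hc := tendsto_cplus
  have hratio : Tendsto (fun ε => (cplus ε - 1/2)/(cplus ε + 1/2)) (𝓝[>] (0:ℝ)) (𝓝[>] 0) := by
    rw [tendsto_nhdsWithin_iff]
    constructor
    · have := (hc.sub_const (1/2)).div (hc.add_const (1/2)) (by norm_num)
      simpa [Pi.div_def] using this
    · filter_upwards [self_mem_nhdsWithin] with ε hε
      have h := half_lt_cplus hε
      exact Set.mem_Ioi.mpr (div_pos (by linarith) (by linarith))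
  have hinv : Tendsto (fun ε => (cplus ε + 1/2)/(cplus ε - 1/2)) (𝓝[>] (0:ℝ)) atTop := by
    have := hratio.inv_tendsto_nhdsGT_zero
    refine this.congr fun ε => ?_
    simp [Pi.inv_apply, inv_div]
  have hlog : Tendsto Lc (𝓝[>] (0:ℝ)) atTop := Real.tendsto_log_atTop.comp hinv
  have := hc.div_atTop hlog
  exact this

/-- `f̃_ε → (1/2)δ₀ + (1/2)δ₁` in the sense of distributions: for every smooth
compactly supported `φ`, `lim_{ε→0⁺} ∫_ℝ f̃_ε φ = (1/2)φ(0) + (1/2)φ(1)`. -/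
theorem fviscExt_tendsto_half_delta (φ : ℝ → ℝ) (hφ : ContDiff ℝ (⊤ : ℕ∞) φ)
    (hφc : HasCompactSupport φ) :
    Tendsto (fun ε : ℝ => ∫ x : ℝ, fviscExt ε x * φ x)
      (𝓝[>] (0:ℝ)) (𝓝 ((1/2) * φ 0 + (1/2) * φ 1)) := by
  obtain ⟨K, hK⟩ := ContDiff.lipschitzWith_of_hasCompactSupport hφc hφ (by simp)
  set M : ℝ := (K : ℝ) with hM_def
  have hM : 0 ≤ M := K.coe_nonneg
  have key : ∀ ε ∈ Set.Ioi (0:ℝ),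
      |(∫ x : ℝ, fviscExt ε x * φ x) - ((1/2) * φ 0 + (1/2) * φ 1)| ≤ 2*M*bconst ε := by
    intro ε hε
    rw [Set.mem_Ioi] at hε
    have hbp := bconst_pos hε
    have hsub1 : Set.uIcc (0:ℝ) (1/2) ⊆ Set.Icc (0:ℝ) 1 := by
      rw [Set.uIcc_of_le (by norm_num)]
      exact Set.Icc_subset_Icc le_rfl (by norm_num)
    have hsub2 : Set.uIcc (1/2:ℝ) 1 ⊆ Set.Icc (0:ℝ) 1 := by
      rw [Set.uIcc_of_le (by norm_num)]
      exact Set.Icc_subset_Icc (by norm_num) le_rfl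
    have hint1 := intInt hε hsub1 φ hφ.continuous
    have hint2 := intInt hε hsub2 φ hφ.continuous
    have hintc1 : IntervalIntegrable (fun x => bconst ε/(x*(1-x)+ε) * φ 0) volume 0 (1/2) := by
      simpa using intInt hε hsub1 (fun _ => φ 0) continuous_const
    have hintc2 : IntervalIntegrable (fun x => bconst ε/(x*(1-x)+ε) * φ 1) volume (1/2) 1 := by
      simpa using intInt hε hsub2 (fun _ => φ 1) continuous_const
    have hrw : (∫ x : ℝ, fviscExt ε x * φ x)
        = ∫ x in (0:ℝ)..1, bconst ε/(x*(1-x)+ε) * φ x := by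
      rw [intervalIntegral.integral_of_le (by norm_num : (0:ℝ) ≤ 1),
          ← MeasureTheory.integral_Icc_eq_integral_Ioc,
          ← MeasureTheory.integral_indicator measurableSet_Icc]
      congr 1
      ext x
      simp only [fviscExt, Set.indicator_apply]
      split_ifs <;> simp
    have hsplit := intervalIntegral.integral_add_adjacent_intervals hint1 hint2
    have he1 : ∫ x in (0:ℝ)..(1/2), bconst ε/(x*(1-x)+ε) * (φ x - φ 0)
        = (∫ x in (0:ℝ)..(1/2), bconst ε/(x*(1-x)+ε) * φ x) - (1/2) * φ 0 := by
      have heq : (fun x => bconst ε/(x*(1-x)+ε) * (φ x - φ 0))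
          = fun x => bconst ε/(x*(1-x)+ε) * φ x - bconst ε/(x*(1-x)+ε) * φ 0 := by
        funext x; ring
      rw [heq, intervalIntegral.integral_sub hint1 hintc1,
          intervalIntegral.integral_mul_const, integral_left hε]
    have he2 : ∫ x in (1/2:ℝ)..1, bconst ε/(x*(1-x)+ε) * (φ x - φ 1)
        = (∫ x in (1/2:ℝ)..1, bconst ε/(x*(1-x)+ε) * φ x) - (1/2) * φ 1 := by
      have heq : (fun x => bconst ε/(x*(1-x)+ε) * (φ x - φ 1))
          = fun x => bconst ε/(x*(1-x)+ε) * φ x - bconst ε/(x*(1-x)+ε) * φ 1 := by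
        funext x; ring
      rw [heq, intervalIntegral.integral_sub hint2 hintc2,
          intervalIntegral.integral_mul_const, integral_right hε]
    have hb1 : ‖∫ x in (0:ℝ)..(1/2), bconst ε/(x*(1-x)+ε) * (φ x - φ 0)‖
        ≤ 2*M*bconst ε * |1/2 - (0:ℝ)| := by
      apply intervalIntegral.norm_integral_le_of_norm_le_const
      intro x hx
      rw [Set.uIoc_of_le (by norm_num)] at hx
      obtain ⟨hx0, hx1⟩ := hx
      have hden : 0 < x*(1-x)+ε := den_pos hε ⟨hx0.le, by linarith⟩
      have hgp : 0 < bconst ε/(x*(1-x)+ε) := div_pos hbp hden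
      have hφx : |φ x - φ 0| ≤ M * x := by
        have h := hK.dist_le_mul x 0
        rw [Real.dist_eq, Real.dist_eq] at h
        simpa [abs_of_pos hx0] using h
      have hx2 : x ≤ 2*(x*(1-x)+ε) := by nlinarith
      rw [Real.norm_eq_abs, abs_mul, abs_of_pos hgp]
      calc bconst ε/(x*(1-x)+ε) * |φ x - φ 0|
          ≤ bconst ε/(x*(1-x)+ε) * (M * x) := by
            exact mul_le_mul_of_nonneg_left hφx hgp.le
        _ ≤ 2*M*bconst ε := by
            rw [div_mul_eq_mul_div, div_le_iff₀ hden]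
            nlinarith [mul_le_mul_of_nonneg_left hx2 (mul_nonneg hM hbp.le)]
    have hb2 : ‖∫ x in (1/2:ℝ)..1, bconst ε/(x*(1-x)+ε) * (φ x - φ 1)‖
        ≤ 2*M*bconst ε * |1 - (1/2:ℝ)| := by
      apply intervalIntegral.norm_integral_le_of_norm_le_const
      intro x hx
      rw [Set.uIoc_of_le (by norm_num)] at hx
      obtain ⟨hx0, hx1⟩ := hx
      have hden : 0 < x*(1-x)+ε := den_pos hε ⟨by linarith, hx1⟩
      have hgp : 0 < bconst ε/(x*(1-x)+ε) := div_pos hbp hden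
      have hφx : |φ x - φ 1| ≤ M * (1 - x) := by
        have h := hK.dist_le_mul x 1
        rw [Real.dist_eq, Real.dist_eq,
          show |x - (1:ℝ)| = 1 - x by rw [abs_sub_comm]; exact abs_of_nonneg (by linarith)] at h
        exact h
      have hx2 : 1 - x ≤ 2*(x*(1-x)+ε) := by nlinarith
      rw [Real.norm_eq_abs, abs_mul, abs_of_pos hgp]
      calc bconst ε/(x*(1-x)+ε) * |φ x - φ 1|
          ≤ bconst ε/(x*(1-x)+ε) * (M * (1 - x)) := by
            exact mul_le_mul_of_nonneg_left hφx hgp.le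
        _ ≤ 2*M*bconst ε := by
            rw [div_mul_eq_mul_div, div_le_iff₀ hden]
            nlinarith [mul_le_mul_of_nonneg_left hx2 (mul_nonneg hM hbp.le)]
    have hb1' : |∫ x in (0:ℝ)..(1/2), bconst ε/(x*(1-x)+ε) * (φ x - φ 0)| ≤ M*bconst ε := by
      rw [Real.norm_eq_abs] at hb1
      have : |(1:ℝ)/2 - 0| = 1/2 := by norm_num
      rw [this] at hb1
      linarith
    have hb2' : |∫ x in (1/2:ℝ)..1, bconst ε/(x*(1-x)+ε) * (φ x - φ 1)| ≤ M*bconst ε := by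
      rw [Real.norm_eq_abs] at hb2
      have : |(1:ℝ) - 1/2| = 1/2 := by norm_num
      rw [this] at hb2
      linarith
    have hdecomp : (∫ x : ℝ, fviscExt ε x * φ x) - ((1/2) * φ 0 + (1/2) * φ 1)
        = (∫ x in (0:ℝ)..(1/2), bconst ε/(x*(1-x)+ε) * (φ x - φ 0))
          + (∫ x in (1/2:ℝ)..1, bconst ε/(x*(1-x)+ε) * (φ x - φ 1)) := by
      rw [hrw, ← hsplit, he1, he2]; ring
    rw [hdecomp]
    calc |_ + _| ≤ _ + _ := abs_add_le _ _
      _ ≤ M*bconst ε + M*bconst ε := add_le_add hb1' hb2'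
      _ = 2*M*bconst ε := by ring
  have hT : Tendsto (fun ε : ℝ => (∫ x : ℝ, fviscExt ε x * φ x)
      - ((1/2) * φ 0 + (1/2) * φ 1)) (𝓝[>] (0:ℝ)) (𝓝 0) := by
    apply squeeze_zero_norm' _ (by simpa using tendsto_bconst.const_mul (2*M))
    filter_upwards [self_mem_nhdsWithin] with ε hε
    simpa [Real.norm_eq_abs] using key ε hε
  have := hT.add_const ((1/2) * φ 0 + (1/2) * φ 1)
  simpa using this
end

section
/- Let M ≥ 2 be an integer, h = 1/M, x_i = i·h, D(x) = x(1−x), and let f_{i−1}, f_i, f_{i+1} be arbitrary real numbers for a fixed index 1 ≤ i ≤ M−1. Define the central split flux j^c_{i+1/2} = −x_{i+1/2}(1−x_{i+1/2})·(f_{i+1} − f_i)/h + (2x_{i+1/2} − 1)·(f_{i+1} + f_i)/2, where x_{i±1/2} = (i ± 1/2)h, and similarly j^c_{i−1/2}. Then (j^c_{i+1/2} − j^c_{i−1/2})/h = −(D(x_{i+1})f_{i+1} − 2D(x_i)f_i + D(x_{i−1})f_{i−1})/h² − (1/4)(f_{i+1} − 2f_i + f_{i−1}). That is, the central scheme applied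 to the split convection–diffusion form equals the central scheme applied to the whole flux −∂_x(x(1−x)f) plus the artificial viscosity term Λ = −(h²/4)·(f_{i+1} − 2f_i + f_{i−1})/h². -/
/-- The central scheme applied to the split convection–diffusion form of the
genetic-drift flux equals the central scheme applied to the whole flux
`−∂ₓ(x(1−x)f)` plus the artificial viscosity term `−(1/4)(f_{i+1} − 2f_i + f_{i−1})`. -/
theorem scheme2_eq_scheme3_plus_viscosity
    (M : ℕ) (hM : 2 ≤ M) (i : ℕ) (hi1 : 1 ≤ i) (hi2 : i ≤ M - 1)
    (fm f0 fp : ℝ)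
    (h xp xm xi xip xim jp jm : ℝ)
    (hh : h = 1 / (M : ℝ))
    (hxi : xi = (i : ℝ) * h)
    (hxip : xip = ((i : ℝ) + 1) * h)
    (hxim : xim = ((i : ℝ) - 1) * h)
    (hxp : xp = ((i : ℝ) + 1/2) * h)
    (hxm : xm = ((i : ℝ) - 1/2) * h)
    (hjp : jp = -(xp * (1 - xp)) * (fp - f0) / h + (2 * xp - 1) * (fp + f0) / 2)
    (hjm : jm = -(xm * (1 - xm)) * (f0 - fm) / h + (2 * xm - 1) * (f0 + fm) / 2) :
    (jp - jm) / h =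
      -((xip * (1 - xip) * fp - 2 * (xi * (1 - xi)) * f0 + xim * (1 - xim) * fm) / h ^ 2)
        - (1/4) * (fp - 2 * f0 + fm) := by
  have hh0 : h ≠ 0 := by
    have : (M : ℝ) ≠ 0 := by positivity
    rw [hh]; positivity
  subst hjp hjm hxp hxm hxi hxip hxim
  field_simp
  ring
end

section
/- Let M ≥ 2 be an integer, h = 1/M, x_i = i·h, D_i = x_i(1 − x_i), τ > 0. Suppose f = (f_0,…,f_M) and f' = (f'_0,…,f'_M) satisfy the Scheme 3 update: with j_{i+1/2} = −(D_{i+1} f'_{i+1} − D_i f'_i)/h, one has f'_i = f_i − (τ/h)(j_{i+1/2} − j_{i−1/2}) for i = 1,…,M−1, f'_0 = f_0 − (2τ/h)·j_{1/2}, and f'_M = f_M + (2τ/h)·j_{M−1/2}. Then the discrete expectation is conserved: (h/2)x_0 f'_0 + (h/2)x_M f'_M + Σ_{i=1}^{M−1} x_i f'_i h = (h/2)x_0 f_0 + (h/2)x_M f_M + Σ_{i=1}^{M−1} x_i f_i h. -/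
/-!
Multiplying the update by `x_i h` and summing, the interior contributes `-τ h Σ i (j_i - j_{i-1})`,
which by summation by parts is `-τ h (M j_{M-1} - Σ_i j_i)`. The fluxes telescope to
`(D_0 f'_0 - D_M f'_M)/h = 0` since the diffusion coefficient vanishes at both ends, and the
remaining `-τ M h j_{M-1}` is cancelled by the right boundary update; the left boundary carries
weight `x_0 = 0`.
-/

open Finset

theorem sum_range_succ_mul_sub (j : ℕ → ℝ) (n : ℕ) :
    ∑ k ∈ range n, ((k : ℝ) + 1) * (j (k + 1) - j k) = n * j n - ∑ k ∈ range n, j k := by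
  induction n with
  | zero => simp
  | succ n ih =>
    rw [sum_range_succ, ih, sum_range_succ]
    push_cast
    ring

theorem sum_Ico_one_mul_sub (j : ℕ → ℝ) (M : ℕ) :
    ∑ i ∈ Ico 1 M, (i : ℝ) * (j i - j (i - 1)) = M * j (M - 1) - ∑ i ∈ range M, j i := by
  cases M with
  | zero => simp
  | succ n =>
    calc ∑ i ∈ Ico 1 (n + 1), (i : ℝ) * (j i - j (i - 1))
        = ∑ k ∈ range n, ((k : ℝ) + 1) * (j (k + 1) - j k) := by
          rw [sum_Ico_eq_sum_range, Nat.add_sub_cancel]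
          refine sum_congr rfl fun k _ => ?_
          rw [Nat.add_sub_cancel_left, add_comm 1 k]
          push_cast
          rfl
      _ = (n + 1 : ℕ) * j n - ∑ i ∈ range (n + 1), j i := by
          rw [sum_range_succ_mul_sub, sum_range_succ]
          push_cast
          ring

theorem mul_one_sub_mul_eq_zero_of_eq_one_div {M h : ℝ} (hh : h = 1 / M) :
    M * h * (1 - M * h) = 0 := by
  rcases eq_or_ne M 0 with rfl | hM
  · simp
  · rw [hh, mul_one_div_cancel hM]
    ring

theorem div_mul_self_mul_self (a h : ℝ) : a / h * h * h = a * h := by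
  rcases eq_or_ne h 0 with rfl | hh
  · simp
  · rw [div_mul_cancel₀ a hh]

theorem scheme3_conserves_expectation_general
    (M : ℕ) (h τ : ℝ) (hh : h = 1 / (M : ℝ))
    (f f' j : ℕ → ℝ)
    (hj : ∀ i, j i = -((((i : ℝ) + 1) * h * (1 - ((i : ℝ) + 1) * h)) * f' (i + 1)
        - ((i : ℝ) * h * (1 - (i : ℝ) * h)) * f' i) / h)
    (hint : ∀ i, 1 ≤ i → i ≤ M - 1 → f' i = f i - (τ / h) * (j i - j (i - 1)))
    (hbM : f' M = f M + (2 * τ / h) * j (M - 1)) :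
    h / 2 * ((0 : ℝ) * h) * f' 0 + h / 2 * ((M : ℝ) * h) * f' M
        + ∑ i ∈ Finset.Ico 1 M, ((i : ℝ) * h) * f' i * h =
      h / 2 * ((0 : ℝ) * h) * f 0 + h / 2 * ((M : ℝ) * h) * f M
        + ∑ i ∈ Finset.Ico 1 M, ((i : ℝ) * h) * f i * h := by
  set D : ℕ → ℝ := fun i => (i : ℝ) * h * (1 - (i : ℝ) * h)
  have total_flux : ∑ i ∈ range M, j i = 0 := by
    have hjD : ∀ i, j i = (D i * f' i - D (i + 1) * f' (i + 1)) / h := fun i => by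
      simp only [hj i, D]; push_cast; ring
    rw [sum_congr rfl fun i _ => hjD i, ← sum_div, sum_range_sub' (fun i => D i * f' i)]
    simp [D, mul_one_sub_mul_eq_zero_of_eq_one_div hh]
  have interior : ∀ i ∈ Ico 1 M,
      (i * h) * f' i * h = (i * h) * f i * h - τ * h * (i * (j i - j (i - 1))) := by
    intro i hi
    rw [mem_Ico] at hi
    rw [hint i hi.1 (by omega)]
    linear_combination (-(i : ℝ) * τ) * div_mul_self_mul_self (j i - j (i - 1)) h
  rw [sum_congr rfl interior, sum_sub_distrib, ← mul_sum, sum_Ico_one_mul_sub, total_flux, hbM]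
  linear_combination (M * j (M - 1) / 2) * div_mul_self_mul_self (2 * τ) h

/-- The implicit Scheme 3 update conserves the discrete expectation
`E(g) = (h/2)x₀g₀ + (h/2)x_M g_M + Σ_{i=1}^{M−1} x_i g_i h`. -/
theorem scheme3_conserves_expectation
    (M : ℕ) (hM : 2 ≤ M) (h τ : ℝ) (hh : h = 1 / (M : ℝ)) (hτ : 0 < τ)
    (f f' j : ℕ → ℝ)
    (hj : ∀ i, j i = -((((i : ℝ) + 1) * h * (1 - ((i : ℝ) + 1) * h)) * f' (i + 1)
        - ((i : ℝ) * h * (1 - (i : ℝ) * h)) * f' i) / h)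
    (hint : ∀ i, 1 ≤ i → i ≤ M - 1 → f' i = f i - (τ / h) * (j i - j (i - 1)))
    (hb0 : f' 0 = f 0 - (2 * τ / h) * j 0)
    (hbM : f' M = f M + (2 * τ / h) * j (M - 1)) :
    h / 2 * ((0 : ℝ) * h) * f' 0 + h / 2 * ((M : ℝ) * h) * f' M
        + ∑ i ∈ Finset.Ico 1 M, ((i : ℝ) * h) * f' i * h =
      h / 2 * ((0 : ℝ) * h) * f 0 + h / 2 * ((M : ℝ) * h) * f M
        + ∑ i ∈ Finset.Ico 1 M, ((i : ℝ) * h) * f i * h :=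
  scheme3_conserves_expectation_general M h τ hh f f' j hj hint hbM
end

section
/- Let M ≥ 2 be an integer, h = 1/M, τ > 0, x_i = i·h, and D_i = x_i(1 − x_i) > 0 for i = 1,…,M−1. Suppose v = (v_0,…,v_M) satisfies v_0 = v_M = 0 and v_i − τ D_i (v_{i+1} − 2v_i + v_{i−1})/h² = g_i for i = 1,…,M−1, where g_i ≥ 0 for all i. Then v_i ≥ 0 for all i = 0,…,M (discrete maximum principle for the implicit Scheme 3). -/
/-- Discrete maximum principle for the implicit Scheme 3: if `v₀ = v_M = 0` and
`v_i − τ D_i (v_{i+1} − 2v_i + v_{i−1})/h² = g_i ≥ 0` for `i = 1,…,M−1`, with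
`D_i = x_i(1−x_i)`, `x_i = i·h`, `h = 1/M`, then `v_i ≥ 0` for all `i = 0,…,M`. -/
theorem scheme3_discrete_maximum_principle
    (M : ℕ) (hM : 2 ≤ M) (h τ : ℝ) (hh : h = 1 / (M : ℝ)) (hτ : 0 < τ)
    (v g : ℕ → ℝ)
    (hv0 : v 0 = 0) (hvM : v M = 0)
    (heq : ∀ i, 1 ≤ i → i ≤ M - 1 →
      v i - τ * ((i : ℝ) * h * (1 - (i : ℝ) * h)) * (v (i + 1) - 2 * v i + v (i - 1)) / h ^ 2
        = g i)
    (hg : ∀ i, 1 ≤ i → i ≤ M - 1 → 0 ≤ g i) :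
    ∀ i, i ≤ M → 0 ≤ v i := by
  have hM0 : 0 < (M : ℝ) := by positivity
  have hhpos : 0 < h := by rw [hh]; positivity
  obtain ⟨i₀, hi₀mem, hi₀min⟩ :=
    Finset.exists_min_image (Finset.range (M + 1)) v ⟨0, by simp⟩
  have hi₀M : i₀ ≤ M := Nat.lt_succ_iff.mp (Finset.mem_range.mp hi₀mem)
  have key : 0 ≤ v i₀ := by
    by_contra hneg
    push_neg at hneg
    have hne0 : i₀ ≠ 0 := by rintro rfl; rw [hv0] at hneg; linarith
    have hneM : i₀ ≠ M := by rintro rfl; rw [hvM] at hneg; linarith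
    have h1 : 1 ≤ i₀ := Nat.one_le_iff_ne_zero.mpr hne0
    have h2 : i₀ ≤ M - 1 := Nat.le_sub_one_of_lt (lt_of_le_of_ne hi₀M hneM)
    have hi₀lt : i₀ < M := lt_of_le_of_ne hi₀M hneM
    have hD : 0 < (i₀ : ℝ) * h * (1 - (i₀ : ℝ) * h) := by
      have hi₀R : (1 : ℝ) ≤ (i₀ : ℝ) := by exact_mod_cast h1
      have hlt : (i₀ : ℝ) < (M : ℝ) := by exact_mod_cast hi₀lt
      have : (i₀ : ℝ) * h < 1 := by
        rw [hh, mul_one_div, div_lt_one hM0]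
        exact hlt
      have h0 : 0 < (i₀ : ℝ) * h := by positivity
      nlinarith
    have hΔ : 0 ≤ v (i₀ + 1) - 2 * v i₀ + v (i₀ - 1) := by
      have ha : v i₀ ≤ v (i₀ + 1) := by
        apply hi₀min; exact Finset.mem_range.mpr (by omega)
      have hb : v i₀ ≤ v (i₀ - 1) := by
        apply hi₀min; exact Finset.mem_range.mpr (by omega)
      linarith
    have hgle : g i₀ ≤ v i₀ := by
      rw [← heq i₀ h1 h2]
      have : 0 ≤ τ * ((i₀ : ℝ) * h * (1 - (i₀ : ℝ) * h)) *
          (v (i₀ + 1) - 2 * v i₀ + v (i₀ - 1)) / h ^ 2 := by positivity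
      linarith
    have := hg i₀ h1 h2
    linarith
  intro i hi
  exact le_trans key (hi₀min i (Finset.mem_range.mpr (by omega)))
end

section
/- Let M ≥ 2 be an integer. For every real vector w = (w_0,…,w_M) with w_0 = w_M = 0, one has Σ_{i=0}^{M−1} (w_{i+1} − w_i)² ≥ 4 sin²(π/(2M)) · Σ_{i=1}^{M−1} w_i². Equivalently, the minimum eigenvalue of the discrete Dirichlet Laplacian −Δ_h, where (Δ_h w)_i = (w_{i−1} − 2w_i + w_{i+1})/h², on the grid of mesh size h = 1/M is λ₀ = (4/h²)·sin²(π/(2M)). -/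
/-!
Substitute `w = s * v`, where `s i = sin (i π / M)` is the positive Dirichlet eigenvector of the
discrete Laplacian, with eigenvalue `2 - 2 cos (π / M) = 4 sin² (π / (2M))`. Summation by parts
splits the Dirichlet energy of `w` into the nonnegative weighted energy
`∑ s i s (i+1) (v (i+1) - v i)²` of `v` and the potential term `∑ (-Δ s)_i s i v i²`, which equals
the eigenvalue times `∑ w i²`. Only `-Δ s ≥ μ s` is needed, for any positive `s` vanishing at the ends.
-/

open Finset Real

theorem two_mul_sin_sub_sin_sub_sin_add (x y : ℝ) :
    2 * sin x - sin (x - y) - sin (x + y) = 4 * sin (y / 2) ^ 2 * sin x := by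
  have hcos : cos y = 1 - 2 * sin (y / 2) ^ 2 := by
    rw [← cos_two_mul_eq_one_sub, mul_div_cancel₀ _ two_ne_zero]
  rw [sin_sub, sin_add, hcos]
  ring

theorem sum_sq_sub_mul_eq {M : ℕ} {s : ℕ → ℝ} (hs0 : s 0 = 0) (hsM : s M = 0) (v : ℕ → ℝ) :
    ∑ i ∈ range M, (s (i + 1) * v (i + 1) - s i * v i) ^ 2 =
      ∑ i ∈ range M, s i * s (i + 1) * (v (i + 1) - v i) ^ 2 +
        ∑ i ∈ Ico 1 M, (2 * s i - s (i - 1) - s (i + 1)) * s i * v i ^ 2 := by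
  have hterm : ∀ i, (s (i + 1) * v (i + 1) - s i * v i) ^ 2 =
      s i * s (i + 1) * (v (i + 1) - v i) ^ 2 +
        (s (i + 1) * (s (i + 1) - s i) * v (i + 1) ^ 2 + s i * (s i - s (i + 1)) * v i ^ 2) := by
    intro i; ring
  simp only [hterm, sum_add_distrib, add_right_inj]
  cases M with
  | zero => simp
  | succ n =>
    rw [sum_range_succ, sum_range_succ' (fun i => s i * (s i - s (i + 1)) * v i ^ 2), hsM, hs0,
      sum_Ico_eq_sum_range]
    simp only [zero_mul, add_zero, add_tsub_cancel_right, ← sum_add_distrib]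
    refine sum_congr rfl fun i _ => ?_
    rw [add_comm 1 i, Nat.add_sub_cancel]
    ring

theorem sum_sq_sub_ge_of_supersolution {M : ℕ} {s w : ℕ → ℝ} {μ : ℝ} (hs0 : s 0 = 0)
    (hsM : s M = 0) (hpos : ∀ i ∈ Ico 1 M, 0 < s i)
    (hsuper : ∀ i ∈ Ico 1 M, μ * s i ≤ 2 * s i - s (i - 1) - s (i + 1))
    (hw0 : w 0 = 0) (hwM : w M = 0) :
    μ * ∑ i ∈ Ico 1 M, w i ^ 2 ≤ ∑ i ∈ range M, (w (i + 1) - w i) ^ 2 := by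
  -- at the endpoints `s = 0`, so `v = 0` there and `w = s * v` still holds since `w = 0`
  set v : ℕ → ℝ := fun i => w i / s i
  have hwv : ∀ i ≤ M, w i = s i * v i := by
    intro i hi
    rcases Nat.eq_zero_or_pos i with rfl | hi0
    · simp [v, hw0]
    rcases hi.lt_or_eq with hiM | rfl
    · exact (mul_div_cancel₀ _ (hpos i (mem_Ico.2 ⟨hi0, hiM⟩)).ne').symm
    · simp [v, hwM]
  have hs_nonneg : ∀ i ≤ M, 0 ≤ s i := by
    intro i hi
    rcases Nat.eq_zero_or_pos i with rfl | hi0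
    · exact hs0.ge
    rcases hi.lt_or_eq with hiM | rfl
    · exact (hpos i (mem_Ico.2 ⟨hi0, hiM⟩)).le
    · exact hsM.ge
  have hsubst : ∑ i ∈ range M, (w (i + 1) - w i) ^ 2 =
      ∑ i ∈ range M, (s (i + 1) * v (i + 1) - s i * v i) ^ 2 :=
    sum_congr rfl fun i hi => by
      rw [hwv i (mem_range.1 hi).le, hwv (i + 1) (mem_range.1 hi)]
  have hgradient : 0 ≤ ∑ i ∈ range M, s i * s (i + 1) * (v (i + 1) - v i) ^ 2 :=
    sum_nonneg fun i hi => by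
      have := hs_nonneg i (mem_range.1 hi).le
      have := hs_nonneg (i + 1) (mem_range.1 hi)
      positivity
  have hpotential : μ * ∑ i ∈ Ico 1 M, w i ^ 2 ≤
      ∑ i ∈ Ico 1 M, (2 * s i - s (i - 1) - s (i + 1)) * s i * v i ^ 2 := by
    rw [mul_sum]
    refine sum_le_sum fun i hi => ?_
    have hsv : 0 ≤ s i * v i ^ 2 := by have := hpos i hi; positivity
    calc μ * w i ^ 2 = μ * s i * (s i * v i ^ 2) := by
          rw [hwv i (mem_Ico.1 hi).2.le]; ring
      _ ≤ (2 * s i - s (i - 1) - s (i + 1)) * (s i * v i ^ 2) :=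
          mul_le_mul_of_nonneg_right (hsuper i hi) hsv
      _ = _ := by ring
  rw [hsubst, sum_sq_sub_mul_eq hs0 hsM]
  linarith

theorem sin_nat_mul_pi_div_pos {i M : ℕ} (hi : 0 < i) (hiM : i < M) : 0 < sin (i * (π / M)) := by
  have hM : (0 : ℝ) < M := Nat.cast_pos.2 (hi.trans hiM)
  apply sin_pos_of_pos_of_lt_pi (by positivity)
  rw [mul_div_assoc', div_lt_iff₀ hM, mul_comm π]
  exact mul_lt_mul_of_pos_right (Nat.cast_lt.2 hiM) pi_pos

theorem discrete_poincare_inequality_general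
    (M : ℕ) (w : ℕ → ℝ) (hw0 : w 0 = 0) (hwM : w M = 0) :
    ∑ i ∈ Finset.range M, (w (i + 1) - w i) ^ 2 ≥
      4 * Real.sin (Real.pi / (2 * (M : ℝ))) ^ 2 * ∑ i ∈ Finset.Ico 1 M, w i ^ 2 := by
  set θ := π / M
  have hhalf : π / (2 * M) = θ / 2 := by rw [div_div, mul_comm]
  refine sum_sq_sub_ge_of_supersolution (s := fun i => sin (i * θ)) (by simp) ?_ ?_ ?_ hw0 hwM
  · rcases eq_or_ne (M : ℝ) 0 with hM | hM
    · simp [θ, hM]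
    · simp [θ, mul_div_cancel₀ _ hM]
  · exact fun i hi => sin_nat_mul_pi_div_pos (mem_Ico.1 hi).1 (mem_Ico.1 hi).2
  · intro i hi
    have hcast : ((i - 1 : ℕ) : ℝ) = i - 1 := by
      rw [Nat.cast_sub (mem_Ico.1 hi).1, Nat.cast_one]
    simp only [hcast, Nat.cast_add, Nat.cast_one, hhalf]
    rw [sub_one_mul, add_one_mul, two_mul_sin_sub_sin_sub_sin_add]

/-- Discrete Poincaré inequality with sharp constant: for any `w` with
`w₀ = w_M = 0`, `Σ_{i=0}^{M−1}(w_{i+1} − w_i)² ≥ 4 sin²(π/(2M)) Σ_{i=1}^{M−1} w_i²`;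
equivalently, the minimal eigenvalue of the discrete Dirichlet Laplacian on mesh
size `h = 1/M` is `λ₀ = (4/h²) sin²(π/(2M))`. -/
theorem discrete_poincare_inequality
    (M : ℕ) (hM : 2 ≤ M) (w : ℕ → ℝ) (hw0 : w 0 = 0) (hwM : w M = 0) :
    ∑ i ∈ Finset.range M, (w (i + 1) - w i) ^ 2 ≥
      4 * Real.sin (Real.pi / (2 * (M : ℝ))) ^ 2 * ∑ i ∈ Finset.Ico 1 M, w i ^ 2 :=
  discrete_poincare_inequality_general M w hw0 hwM
end

section
/- Let M ≥ 2 be an integer, h = 1/M, τ > 0, x_i = i·h, D_i = x_i(1 − x_i). Suppose the interior vector (f'_1,…,f'_{M−1}) with f'_0 := 0 added conventionally satisfies the interior Scheme 3 equations (f'_i − f_i)/τ − (D_{i+1} f'_{i+1} − 2D_i f'_i + D_{i−1} f'_{i−1})/h² = 0 for i = 1,…,M−1 (with D_0 f'_0 and D_M f'_M interpreted as 0), and that f'_i ≥ 0 for i = 1,…,M−1. Then the interior discrete mass is non-increasing: Σ_{i=1}^{M−1} f'_i h ≤ Σ_{i=1}^{M−1} f_i h. -/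
/-!
Writing `g_i = D_i f'_i`, the scheme says that `f'_i - f_i` is `τ / h²` times the second
difference of `g`, i.e. the difference of two consecutive discrete fluxes. Summed over the
interior these telescope to the boundary fluxes `(g_M - g_{M-1}) - (g_1 - g_0)`. Since
`D_0 = D_M = 0` and `D_i ≥ 0` on the grid, this is `-(g_1 + g_{M-1}) ≤ 0`.
-/

open Finset

theorem Finset.sum_Ico_second_difference {G : Type*} [AddCommGroup G] (g : ℕ → G) {M : ℕ}
    (hM : 1 ≤ M) :
    ∑ i ∈ Ico 1 M, ((g (i + 1) - g i) - (g i - g (i - 1))) =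
      (g M - g (M - 1)) - (g 1 - g 0) := by
  induction M, hM using Nat.le_induction with
  | base => simp
  | succ M hM ih =>
    rw [sum_Ico_succ_top hM, ih, Nat.add_sub_cancel]
    abel

theorem sum_Ico_le_sum_Ico_of_sub_eq_flux_difference {u v g : ℕ → ℝ} {c : ℝ} {M : ℕ}
    (hM : 1 ≤ M) (hc : 0 ≤ c) (hleft : g 0 ≤ g 1) (hright : g M ≤ g (M - 1))
    (hstep : ∀ i ∈ Ico 1 M, u i - v i = c * ((g (i + 1) - g i) - (g i - g (i - 1)))) :
    ∑ i ∈ Ico 1 M, u i ≤ ∑ i ∈ Ico 1 M, v i := by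
  have hsum : ∑ i ∈ Ico 1 M, (u i - v i) = c * ((g M - g (M - 1)) - (g 1 - g 0)) := by
    rw [sum_congr rfl hstep, ← mul_sum, sum_Ico_second_difference g hM]
  have hflux : c * ((g M - g (M - 1)) - (g 1 - g 0)) ≤ 0 :=
    mul_nonpos_of_nonneg_of_nonpos hc (by linarith)
  rw [sum_sub_distrib] at hsum
  linarith

theorem eq_div_mul_of_div_sub_div_eq_zero {x y τ k : ℝ} (hτ : τ ≠ 0) (hk : k ≠ 0)
    (h : x / τ - y / k = 0) : x = τ / k * y := by
  rw [sub_eq_zero, div_eq_div_iff hτ hk] at h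
  field_simp
  linarith

theorem scheme3_interior_mass_nonincreasing_general
    (M : ℕ) (hM : 2 ≤ M) (h τ : ℝ) (hh : h = 1 / (M : ℝ)) (hτ : 0 < τ)
    (f f' : ℕ → ℝ)
    (heq : ∀ i, 1 ≤ i → i ≤ M - 1 →
      (f' i - f i) / τ
        - ((((i : ℝ) + 1) * h * (1 - ((i : ℝ) + 1) * h)) * f' (i + 1)
            - 2 * ((i : ℝ) * h * (1 - (i : ℝ) * h)) * f' i
            + (((i : ℝ) - 1) * h * (1 - ((i : ℝ) - 1) * h)) * f' (i - 1)) / h ^ 2 = 0)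
    (hpos : ∀ i, 1 ≤ i → i ≤ M - 1 → 0 ≤ f' i) :
    ∑ i ∈ Finset.Ico 1 M, f' i * h ≤ ∑ i ∈ Finset.Ico 1 M, f i * h := by
  have hM0 : (0 : ℝ) < M := by positivity
  have hh0 : 0 < h := by rw [hh]; positivity
  set D : ℕ → ℝ := fun i => (i : ℝ) * h * (1 - (i : ℝ) * h)
  have hD : ∀ i ≤ M, 0 ≤ D i := fun i hi => by
    have hx : (i : ℝ) * h ≤ 1 := by
      rw [hh, mul_one_div, div_le_one hM0]; exact_mod_cast hi
    exact mul_nonneg (by positivity) (sub_nonneg.2 hx)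
  have hDM : D M = 0 := by simp only [D, hh]; field_simp; ring
  have hstep : ∀ i ∈ Ico 1 M, f' i - f i = τ / h ^ 2 *
      ((D (i + 1) * f' (i + 1) - D i * f' i) - (D i * f' i - D (i - 1) * f' (i - 1))) := by
    intro i hi
    obtain ⟨hi1, hiM⟩ := mem_Ico.1 hi
    have hscheme := eq_div_mul_of_div_sub_div_eq_zero hτ.ne' (by positivity) (heq i hi1 (by omega))
    simp only [D, Nat.cast_add, Nat.cast_one, Nat.cast_pred hi1]
    linear_combination hscheme
  have hmass := sum_Ico_le_sum_Ico_of_sub_eq_flux_difference (g := fun i => D i * f' i)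
    (by omega) (by positivity)
    (by simpa [D] using mul_nonneg (hD 1 (by omega)) (hpos 1 le_rfl (by omega)))
    (by simpa [hDM] using mul_nonneg (hD (M - 1) (by omega)) (hpos (M - 1) (by omega) le_rfl))
    hstep
  rw [← sum_mul, ← sum_mul]
  exact mul_le_mul_of_nonneg_right hmass hh0.le

/-- For nonnegative solutions of the interior Scheme 3 equations, the interior
discrete mass is non-increasing: `Σ_{i=1}^{M−1} f'_i h ≤ Σ_{i=1}^{M−1} f_i h`.
Here `D_i = x_i(1−x_i)`, `x_i = i·h`, `h = 1/M` (so `D₀ = D_M = 0`). -/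
theorem scheme3_interior_mass_nonincreasing
    (M : ℕ) (hM : 2 ≤ M) (h τ : ℝ) (hh : h = 1 / (M : ℝ)) (hτ : 0 < τ)
    (f f' : ℕ → ℝ) (hf'0 : f' 0 = 0)
    (heq : ∀ i, 1 ≤ i → i ≤ M - 1 →
      (f' i - f i) / τ
        - ((((i : ℝ) + 1) * h * (1 - ((i : ℝ) + 1) * h)) * f' (i + 1)
            - 2 * ((i : ℝ) * h * (1 - (i : ℝ) * h)) * f' i
            + (((i : ℝ) - 1) * h * (1 - ((i : ℝ) - 1) * h)) * f' (i - 1)) / h ^ 2 = 0)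
    (hpos : ∀ i, 1 ≤ i → i ≤ M - 1 → 0 ≤ f' i) :
    ∑ i ∈ Finset.Ico 1 M, f' i * h ≤ ∑ i ∈ Finset.Ico 1 M, f i * h :=
  scheme3_interior_mass_nonincreasing_general M hM h τ hh hτ f f' heq hpos
end

section
/- Let M ≥ 2 be an integer, h = 1/M, τ > 0, x_i = i·h, D_i = x_i(1 − x_i), and λ₀ = (4/h²)·sin²(π/(2M)). Suppose the interior vector (f'_1,…,f'_{M−1}) satisfies the implicit interior Scheme 3 equations (f'_i − f_i)/τ − (D_{i+1} f'_{i+1} − 2D_i f'_i + D_{i−1} f'_{i−1})/h² = 0 for i = 1,…,M−1 (with D_0 f'_0 and D_M f'_M interpreted as 0). Then the weighted discrete L² quantity decays geometrically: Σ_{i=1}^{M−1} D_i (f'_i)² h ≤ (1 + 2 τ λ₀ h(1−h))^{−1} · Σ_{i=1}^{M−1} D_i (f_i)² h. -/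
open Finset Real

/-!
With `v_i = D_i f'_i` the scheme is the implicit Euler step `(f' - f) / τ = Δ_h v`. Testing it
against `v` and using `2 D f' (f' - f) ≥ D f'² - D f²` bounds the change of the energy
`E(g) = Σ D_i g_i²` by `2τ ⟨Δ_h v, v⟩`. The sine vector `sin (iπ/M)` is a positive eigenvector of
`Δ_h` with Dirichlet conditions; weighting the AM-GM inequality `2 v_i v_{i+1} ≤ …` by it gives the
discrete Poincaré inequality `⟨-Δ_h v, v⟩ ≥ λ₀ ‖v‖²`. Finally `‖v‖² ≥ h(1-h) E(f')` because
`D_i ≥ h(1-h)` at the interior nodes.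
-/

noncomputable def discreteLaplacian (h : ℝ) (v : ℕ → ℝ) (i : ℕ) : ℝ :=
  (v (i + 1) - 2 * v i + v (i - 1)) / h ^ 2

theorem sum_Ico_one_comp_succ_of_eq_zero {β : Type*} [AddCommMonoid β] {M : ℕ} (F : ℕ → β)
    (h1 : F 1 = 0) (hM : F M = 0) :
    ∑ i ∈ Ico 1 M, F (i + 1) = ∑ i ∈ Ico 1 M, F i := by
  rcases Nat.eq_zero_or_pos M with rfl | hM0
  · simp
  have hbot := sum_eq_sum_Ico_succ_bot (show 1 < M + 1 by omega) F
  rw [sum_Ico_succ_top hM0, h1, hM, zero_add, add_zero] at hbot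
  rw [sum_Ico_add', hbot]

theorem two_mul_le_div_mul_sq_add_div_mul_sq {a b : ℝ} (ha : 0 < a) (hb : 0 < b) (x y : ℝ) :
    2 * x * y ≤ b / a * x ^ 2 + a / b * y ^ 2 := by
  have hsq : b / a * x ^ 2 + a / b * y ^ 2 - 2 * x * y = (b * x - a * y) ^ 2 / (a * b) := by
    field_simp
    ring
  have : 0 ≤ (b * x - a * y) ^ 2 / (a * b) := by positivity
  linarith

theorem sum_mul_add_neighbors_le_of_pos_supersolution {M : ℕ} {c : ℝ} {s v : ℕ → ℝ}
    (hs : ∀ i ∈ Ico 1 M, 0 < s i) (hs0 : s 0 = 0) (hsM : s M = 0)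
    (hsuper : ∀ i ∈ Ico 1 M, s (i + 1) + s (i - 1) ≤ 2 * c * s i)
    (hv0 : v 0 = 0) (hvM : v M = 0) :
    ∑ i ∈ Ico 1 M, v i * (v (i + 1) + v (i - 1)) ≤ 2 * c * ∑ i ∈ Ico 1 M, v i ^ 2 := by
  have hpair : ∑ i ∈ Ico 1 M, v i * v (i - 1) = ∑ i ∈ Ico 1 M, v i * v (i + 1) := by
    rw [← sum_Ico_one_comp_succ_of_eq_zero (fun i => v i * v (i - 1)) (by simp [hv0])
      (by simp [hvM])]
    exact sum_congr rfl fun i _ => by simp [mul_comm]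
  have hweights : ∑ i ∈ Ico 1 M, s i / s (i + 1) * v (i + 1) ^ 2
      = ∑ i ∈ Ico 1 M, s (i - 1) / s i * v i ^ 2 :=
    sum_Ico_one_comp_succ_of_eq_zero (fun i => s (i - 1) / s i * v i ^ 2) (by simp [hs0])
      (by simp [hvM])
  -- at `i = M - 1` both sides vanish, as `v M = s M = 0` (and `x / 0 = 0`)
  have hamgm : ∀ i ∈ Ico 1 M,
      2 * v i * v (i + 1) ≤ s (i + 1) / s i * v i ^ 2 + s i / s (i + 1) * v (i + 1) ^ 2 := by
    intro i hi
    by_cases hlast : i + 1 = M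
    · simp [hlast, hsM, hvM]
    · have hi' : i + 1 ∈ Ico 1 M := by simp only [mem_Ico] at hi ⊢; omega
      exact two_mul_le_div_mul_sq_add_div_mul_sq (hs i hi) (hs (i + 1) hi') _ _
  have hsuper' : ∀ i ∈ Ico 1 M, (s (i + 1) / s i + s (i - 1) / s i) * v i ^ 2 ≤ 2 * c * v i ^ 2 :=
    fun i hi => mul_le_mul_of_nonneg_right
      (by rw [← add_div, div_le_iff₀ (hs i hi)]; exact hsuper i hi) (sq_nonneg _)
  calc ∑ i ∈ Ico 1 M, v i * (v (i + 1) + v (i - 1))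
      = ∑ i ∈ Ico 1 M, 2 * v i * v (i + 1) := by
        simp only [mul_add, sum_add_distrib, hpair, mul_assoc, ← two_mul, mul_sum]
    _ ≤ ∑ i ∈ Ico 1 M, (s (i + 1) / s i * v i ^ 2 + s i / s (i + 1) * v (i + 1) ^ 2) :=
        sum_le_sum hamgm
    _ = ∑ i ∈ Ico 1 M, (s (i + 1) / s i + s (i - 1) / s i) * v i ^ 2 := by
        simp only [sum_add_distrib, hweights, add_mul]
    _ ≤ ∑ i ∈ Ico 1 M, 2 * c * v i ^ 2 := sum_le_sum hsuper'
    _ = 2 * c * ∑ i ∈ Ico 1 M, v i ^ 2 := (mul_sum _ _ _).symm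

theorem sin_add_add_sin_sub (x θ : ℝ) : sin (x + θ) + sin (x - θ) = 2 * cos θ * sin x := by
  rw [sin_add, sin_sub]
  ring

theorem sum_mul_add_neighbors_le_two_cos {M : ℕ} {v : ℕ → ℝ} (hv0 : v 0 = 0) (hvM : v M = 0) :
    ∑ i ∈ Ico 1 M, v i * (v (i + 1) + v (i - 1)) ≤ 2 * cos (π / M) * ∑ i ∈ Ico 1 M, v i ^ 2 := by
  rcases Nat.eq_zero_or_pos M with rfl | hM
  · simp
  have hM' : (0 : ℝ) < M := by exact_mod_cast hM
  refine sum_mul_add_neighbors_le_of_pos_supersolution (s := fun i => sin (i * (π / M)))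
    ?_ (by simp) (by simp [mul_div_cancel₀ _ hM'.ne']) ?_ hv0 hvM
  · intro i hi
    rw [mem_Ico] at hi
    have hi1 : (1 : ℝ) ≤ i := by exact_mod_cast hi.1
    have hiM : (i : ℝ) < M := by exact_mod_cast hi.2
    apply sin_pos_of_pos_of_lt_pi (by positivity)
    rw [← lt_div_iff₀ (by positivity), div_div_cancel₀ pi_ne_zero]
    exact hiM
  · intro i hi
    rw [mem_Ico] at hi
    push_cast [Nat.cast_pred hi.1]
    rw [add_mul, sub_mul, one_mul, sin_add_add_sin_sub]

theorem discreteLaplacian_poincare {M : ℕ} (h : ℝ) {v : ℕ → ℝ} (hv0 : v 0 = 0)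
    (hvM : v M = 0) :
    4 / h ^ 2 * sin (π / (2 * M)) ^ 2 * ∑ i ∈ Ico 1 M, v i ^ 2
      ≤ -∑ i ∈ Ico 1 M, discreteLaplacian h v i * v i := by
  have hneighbors := sum_mul_add_neighbors_le_two_cos hv0 hvM
  have hcos : cos (π / M) = 1 - 2 * sin (π / (2 * M)) ^ 2 := by
    rw [← cos_two_mul_eq_one_sub]
    ring_nf
  calc 4 / h ^ 2 * sin (π / (2 * M)) ^ 2 * ∑ i ∈ Ico 1 M, v i ^ 2
      = (2 * (1 - cos (π / M)) * ∑ i ∈ Ico 1 M, v i ^ 2) / h ^ 2 := by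
        rw [hcos]
        ring
    _ ≤ (2 * ∑ i ∈ Ico 1 M, v i ^ 2 - ∑ i ∈ Ico 1 M, v i * (v (i + 1) + v (i - 1))) / h ^ 2 :=
        div_le_div_of_nonneg_right (by linarith) (sq_nonneg h)
    _ = -∑ i ∈ Ico 1 M, discreteLaplacian h v i * v i := by
        rw [mul_sum, ← sum_sub_distrib, sum_div, ← sum_neg_distrib]
        exact sum_congr rfl fun i _ => by rw [discreteLaplacian]; ring

theorem implicit_step_weighted_energy_le {ι : Type*} (s : Finset ι) {τ lam d : ℝ}
    {D f f' L : ι → ℝ} (hτ : 0 < τ) (hlam : 0 ≤ lam) (hd : 0 ≤ d) (hD : ∀ i ∈ s, d ≤ D i)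
    (hstep : ∀ i ∈ s, (f' i - f i) / τ = L i)
    (hdiss : lam * ∑ i ∈ s, (D i * f' i) ^ 2 ≤ -∑ i ∈ s, L i * (D i * f' i)) :
    (1 + 2 * τ * lam * d) * ∑ i ∈ s, D i * f' i ^ 2 ≤ ∑ i ∈ s, D i * f i ^ 2 := by
  have hD0 : ∀ i ∈ s, 0 ≤ D i := fun i hi => hd.trans (hD i hi)
  have hcoercive : d * ∑ i ∈ s, D i * f' i ^ 2 ≤ ∑ i ∈ s, (D i * f' i) ^ 2 := by
    rw [mul_sum]
    refine sum_le_sum fun i hi => ?_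
    calc d * (D i * f' i ^ 2) ≤ D i * (D i * f' i ^ 2) :=
          mul_le_mul_of_nonneg_right (hD i hi) (mul_nonneg (hD0 i hi) (sq_nonneg _))
      _ = (D i * f' i) ^ 2 := by ring
  -- `D f'² - D f² = 2 D (f' - f) f' - D (f' - f)²`, the convexity of the square
  have henergy : ∑ i ∈ s, D i * f' i ^ 2 - ∑ i ∈ s, D i * f i ^ 2
      ≤ 2 * τ * ∑ i ∈ s, L i * (D i * f' i) := by
    rw [← sum_sub_distrib, mul_sum]
    refine sum_le_sum fun i hi => ?_
    have hincr : τ * L i = f' i - f i := by rw [← hstep i hi]; field_simp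
    have hlin : 2 * τ * (L i * (D i * f' i)) = 2 * D i * (f' i - f i) * f' i := by
      rw [← hincr]; ring
    nlinarith [mul_nonneg (hD0 i hi) (sq_nonneg (f' i - f i))]
  have hτlam : 0 ≤ 2 * τ * lam := by positivity
  nlinarith [mul_le_mul_of_nonneg_left hcoercive hτlam]

theorem mul_one_sub_le_mul_one_sub {h x : ℝ} (hx : h ≤ x) (hx' : x ≤ 1 - h) :
    h * (1 - h) ≤ x * (1 - x) := by
  nlinarith [mul_nonneg (sub_nonneg.2 hx) (sub_nonneg.2 hx')]

theorem mul_one_sub_le_natCast_mul_mul_one_sub {M i : ℕ} {h : ℝ} (hh : h = 1 / M)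
    (hi : i ∈ Ico 1 M) : h * (1 - h) ≤ i * h * (1 - i * h) := by
  rw [mem_Ico] at hi
  have hi1 : (1 : ℝ) ≤ i := by exact_mod_cast hi.1
  have hiM : (i : ℝ) + 1 ≤ M := by exact_mod_cast hi.2
  have hM0 : (0 : ℝ) < M := by linarith
  have hh0 : 0 < h := by rw [hh]; positivity
  have hMh : (M : ℝ) * h = 1 := by rw [hh]; field_simp
  exact mul_one_sub_le_mul_one_sub (by nlinarith) (by nlinarith)

/-- One-step geometric decay of the weighted discrete `L²` energy
`Σ_{i=1}^{M−1} D_i f_i² h` for the implicit interior Scheme 3, with decay factor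
`(1 + 2τλ₀h(1−h))⁻¹`, where `λ₀ = (4/h²) sin²(π/(2M))`, `D_i = x_i(1−x_i)`,
`x_i = i·h`, `h = 1/M`. -/
theorem scheme3_weighted_l2_decay
    (M : ℕ) (hM : 2 ≤ M) (h τ lam0 : ℝ) (hh : h = 1 / (M : ℝ)) (hτ : 0 < τ)
    (hlam0 : lam0 = 4 / h ^ 2 * Real.sin (Real.pi / (2 * (M : ℝ))) ^ 2)
    (f f' : ℕ → ℝ)
    (heq : ∀ i, 1 ≤ i → i ≤ M - 1 →
      (f' i - f i) / τ
        - ((((i : ℝ) + 1) * h * (1 - ((i : ℝ) + 1) * h)) * f' (i + 1)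
            - 2 * ((i : ℝ) * h * (1 - (i : ℝ) * h)) * f' i
            + (((i : ℝ) - 1) * h * (1 - ((i : ℝ) - 1) * h)) * f' (i - 1)) / h ^ 2 = 0) :
    ∑ i ∈ Finset.Ico 1 M, ((i : ℝ) * h * (1 - (i : ℝ) * h)) * f' i ^ 2 * h ≤
      (1 + 2 * τ * lam0 * (h * (1 - h)))⁻¹ *
        ∑ i ∈ Finset.Ico 1 M, ((i : ℝ) * h * (1 - (i : ℝ) * h)) * f i ^ 2 * h := by
  have hM0 : (0 : ℝ) < M := by positivity
  have hh0 : 0 < h := by rw [hh]; positivity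
  have hMh : (M : ℝ) * h = 1 := by rw [hh]; field_simp
  have hd : 0 ≤ h * (1 - h) := mul_nonneg hh0.le <| by
    rw [hh, sub_nonneg, div_le_one hM0]; exact_mod_cast (by omega : 1 ≤ M)
  set D : ℕ → ℝ := fun i => (i : ℝ) * h * (1 - (i : ℝ) * h) with hD
  have hstep : ∀ i ∈ Ico 1 M,
      (f' i - f i) / τ = discreteLaplacian h (fun j => D j * f' j) i := by
    intro i hi
    rw [mem_Ico] at hi
    simp only [discreteLaplacian, hD]
    push_cast [Nat.cast_pred hi.1]
    linear_combination heq i hi.1 (by omega)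
  have hpoincare := discreteLaplacian_poincare (M := M) h (v := fun i => D i * f' i)
    (by simp [hD]) (by simp only [hD, hMh, sub_self, mul_zero, zero_mul])
  rw [← hlam0] at hpoincare
  have hlam0_nonneg : 0 ≤ lam0 := by rw [hlam0]; positivity
  have hdecay := implicit_step_weighted_energy_le (Ico 1 M) hτ hlam0_nonneg hd
    (fun i hi => mul_one_sub_le_natCast_mul_mul_one_sub hh hi) hstep hpoincare
  have hK : 0 < 1 + 2 * τ * lam0 * (h * (1 - h)) := by positivity
  rw [← sum_mul, ← sum_mul, ← mul_assoc]
  exact mul_le_mul_of_nonneg_right ((le_inv_mul_iff₀ hK).2 hdecay) hh0.le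
end

section
/- Let M ≥ 2 be an integer, h = 1/M, τ > 0, x_i = i·h, D_i = x_i(1 − x_i). Let f^n = (f^n_0,…,f^n_M), n = 0, 1, 2, …, be any sequence of vectors satisfying for every n the implicit interior Scheme 3 equations (f^{n+1}_i − f^n_i)/τ − (D_{i+1} f^{n+1}_{i+1} − 2D_i f^{n+1}_i + D_{i−1} f^{n+1}_{i−1})/h² = 0 for i = 1,…,M−1 (with D_0 f_0 and D_M f_M interpreted as 0). Then for every interior index i = 1,…,M−1, f^n_i → 0 as n → ∞. -/
open Filter Topology

private lemma abel_sum' (G : ℕ → ℝ) (h0 : G 0 = 0) (K : ℕ) :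
    ∑ j ∈ Finset.range K, G (j+1) * (G (j+2) - 2*G (j+1) + G j)
      = G (K+1) * G K - (G K)^2 - ∑ j ∈ Finset.range K, (G (j+1) - G j)^2 := by
  induction K with
  | zero => simp [h0]
  | succ K ih => rw [Finset.sum_range_succ, Finset.sum_range_succ, ih]; ring

private lemma poincare' (G : ℕ → ℝ) (h0 : G 0 = 0) (M : ℕ) :
    ∑ i ∈ Finset.Icc 1 (M-1), (G i)^2
      ≤ (M:ℝ)^2 * ∑ j ∈ Finset.range M, (G (j+1) - G j)^2 := by
  have key : ∀ i ∈ Finset.Icc 1 (M-1),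
      (G i)^2 ≤ (M:ℝ) * ∑ j ∈ Finset.range M, (G (j+1) - G j)^2 := by
    intro i hi
    simp only [Finset.mem_Icc] at hi
    have hiM : i ≤ M := le_trans hi.2 (Nat.sub_le _ _)
    have htel : G i = ∑ j ∈ Finset.range i, (G (j+1) - G j) := by
      rw [Finset.sum_range_sub, h0, sub_zero]
    have hcs : (G i)^2 ≤ (i:ℝ) * ∑ j ∈ Finset.range i, (G (j+1) - G j)^2 := by
      rw [htel]
      have := sq_sum_le_card_mul_sum_sq (s := Finset.range i)
        (f := fun j => G (j+1) - G j)
      simpa using this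
    refine hcs.trans ?_
    apply mul_le_mul (by exact_mod_cast hiM)
      (Finset.sum_le_sum_of_subset_of_nonneg
        (Finset.range_subset_range.mpr hiM) (fun _ _ _ => sq_nonneg _))
      (Finset.sum_nonneg fun _ _ => sq_nonneg _) (Nat.cast_nonneg _)
  calc ∑ i ∈ Finset.Icc 1 (M-1), (G i)^2
      ≤ ∑ _i ∈ Finset.Icc 1 (M-1), (M:ℝ) * ∑ j ∈ Finset.range M, (G (j+1) - G j)^2 :=
        Finset.sum_le_sum key
    _ = ((M-1:ℕ):ℝ) * ((M:ℝ) * ∑ j ∈ Finset.range M, (G (j+1) - G j)^2) := by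
        rw [Finset.sum_const, Nat.card_Icc]; simp [nsmul_eq_mul]
    _ ≤ (M:ℝ) * ((M:ℝ) * ∑ j ∈ Finset.range M, (G (j+1) - G j)^2) := by
        apply mul_le_mul_of_nonneg_right (by exact_mod_cast Nat.sub_le M 1)
        positivity
    _ = (M:ℝ)^2 * ∑ j ∈ Finset.range M, (G (j+1) - G j)^2 := by ring

private lemma step_est' (M : ℕ) (hM : 1 ≤ M) (c dmin : ℝ) (hc : 0 < c) (hdmin : 0 < dmin)
    (D : ℕ → ℝ) (h0 : D 0 = 0) (hDM : D M = 0)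
    (hDlb : ∀ i ∈ Finset.Icc 1 (M-1), dmin ≤ D i)
    (a b : ℕ → ℝ)
    (hstep : ∀ i ∈ Finset.Icc 1 (M-1),
      b i - a i = c * (D (i+1) * b (i+1) - 2 * (D i * b i) + D (i-1) * b (i-1))) :
    (1 + 2*c*dmin/(M:ℝ)^2) * ∑ i ∈ Finset.Icc 1 (M-1), D i * (b i)^2
      ≤ ∑ i ∈ Finset.Icc 1 (M-1), D i * (a i)^2 := by
  set G : ℕ → ℝ := fun i => D i * b i with hG
  have hG0 : G 0 = 0 := by simp [hG, h0]
  have hGM : G M = 0 := by simp [hG, hDM]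
  have hMsucc : (M - 1) + 1 = M := by omega
  have hreindex : ∑ i ∈ Finset.Icc 1 (M-1), G i * (G (i+1) - 2*G i + G (i-1))
      = ∑ j ∈ Finset.range (M-1), G (j+1) * (G (j+2) - 2*G (j+1) + G j) := by
    rw [show Finset.Icc 1 (M-1) = Finset.Ico 1 M by rw [← Finset.Ico_add_one_right_eq_Icc]; congr 1,
      Finset.sum_Ico_eq_sum_range]
    apply Finset.sum_congr rfl
    intro j _
    have e3 : 1 + j - 1 = j := by omega
    have e2 : 1 + j + 1 = j + 2 := by omega
    have e1 : 1 + j = j + 1 := by omega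
    rw [e3, e2, e1]
  have hsbp : ∑ i ∈ Finset.Icc 1 (M-1), G i * (G (i+1) - 2*G i + G (i-1))
      = - ∑ j ∈ Finset.range M, (G (j+1) - G j)^2 := by
    rw [hreindex, abel_sum' G hG0 (M-1), hMsucc, hGM]
    have : ∑ j ∈ Finset.range M, (G (j+1) - G j)^2
        = ∑ j ∈ Finset.range (M-1), (G (j+1) - G j)^2 + (G M - G (M-1))^2 := by
      conv_lhs => rw [← hMsucc, Finset.sum_range_succ, hMsucc]
    rw [this, hGM]
    ring
  have hsum1 : ∑ i ∈ Finset.Icc 1 (M-1), G i * (b i - a i)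
      = c * ∑ i ∈ Finset.Icc 1 (M-1), G i * (G (i+1) - 2*G i + G (i-1)) := by
    rw [Finset.mul_sum]
    apply Finset.sum_congr rfl
    intro i hi
    rw [hstep i hi]
    simp only [hG]
    ring
  set S := ∑ j ∈ Finset.range M, (G (j+1) - G j)^2 with hS
  have hSnn : 0 ≤ S := Finset.sum_nonneg fun _ _ => sq_nonneg _
  have hpoin := poincare' G hG0 M
  set Eb := ∑ i ∈ Finset.Icc 1 (M-1), D i * (b i)^2 with hEb
  set Ea := ∑ i ∈ Finset.Icc 1 (M-1), D i * (a i)^2 with hEa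
  have hEbnn : 0 ≤ Eb := Finset.sum_nonneg fun i hi =>
    mul_nonneg (hdmin.le.trans (hDlb i hi)) (sq_nonneg _)
  have hGsq : dmin * Eb ≤ ∑ i ∈ Finset.Icc 1 (M-1), (G i)^2 := by
    rw [hEb, Finset.mul_sum]
    apply Finset.sum_le_sum
    intro i hi
    have h1 := hDlb i hi
    have h2 : 0 ≤ D i := hdmin.le.trans h1
    have : (G i)^2 = D i * (D i * (b i)^2) := by simp [hG]; ring
    rw [this]
    apply mul_le_mul_of_nonneg_right h1
    positivity
  have hdiff : Eb - Ea ≤ 2 * ∑ i ∈ Finset.Icc 1 (M-1), G i * (b i - a i) := by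
    rw [hEb, hEa, ← Finset.sum_sub_distrib, Finset.mul_sum]
    apply Finset.sum_le_sum
    intro i hi
    have h2 : 0 ≤ D i := hdmin.le.trans (hDlb i hi)
    have hsq : 0 ≤ D i * (b i - a i)^2 := by positivity
    simp only [hG]
    nlinarith [hsq]
  have hMpos : (0:ℝ) < (M:ℝ)^2 := by
    have : (0:ℝ) < (M:ℝ) := by exact_mod_cast hM
    positivity
  have hfinal : Eb - Ea ≤ -2*c*(dmin*Eb)/(M:ℝ)^2 := by
    have h1 : Eb - Ea ≤ 2 * (c * (-S)) := by
      calc Eb - Ea ≤ 2 * ∑ i ∈ Finset.Icc 1 (M-1), G i * (b i - a i) := hdiff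
        _ = 2 * (c * ∑ i ∈ Finset.Icc 1 (M-1), G i * (G (i+1) - 2*G i + G (i-1))) := by
            rw [hsum1]
        _ = 2 * (c * (-S)) := by rw [hsbp]
    have h2 : dmin * Eb ≤ (M:ℝ)^2 * S := le_trans hGsq hpoin
    rw [le_div_iff₀ hMpos]
    nlinarith [mul_le_mul_of_nonneg_left h2 (by positivity : (0:ℝ) ≤ 2*c),
      mul_le_mul_of_nonneg_right h1 hMpos.le]
  have hexp : (1 + 2*c*dmin/(M:ℝ)^2) * Eb = Eb - (-2*c*(dmin*Eb)/(M:ℝ)^2) := by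
    field_simp
    ring
  rw [hexp]
  linarith [hfinal]

/-- For any sequence of vectors satisfying the implicit interior Scheme 3
equations at every time step, each interior value tends to `0` as `n → ∞`.
Here `D_i = x_i(1−x_i)`, `x_i = i·h`, `h = 1/M` (so `D₀ = D_M = 0`). -/
theorem scheme3_interior_tendsto_zero
    (M : ℕ) (hM : 2 ≤ M) (h τ : ℝ) (hh : h = 1 / (M : ℝ)) (hτ : 0 < τ)
    (f : ℕ → ℕ → ℝ)
    (heq : ∀ n, ∀ i, 1 ≤ i → i ≤ M - 1 →
      (f (n + 1) i - f n i) / τ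
        - ((((i : ℝ) + 1) * h * (1 - ((i : ℝ) + 1) * h)) * f (n + 1) (i + 1)
            - 2 * ((i : ℝ) * h * (1 - (i : ℝ) * h)) * f (n + 1) i
            + (((i : ℝ) - 1) * h * (1 - ((i : ℝ) - 1) * h)) * f (n + 1) (i - 1)) / h ^ 2
          = 0) :
    ∀ i, 1 ≤ i → i ≤ M - 1 → Tendsto (fun n => f n i) atTop (𝓝 0) := by
  have hM1 : 1 ≤ M := by omega
  have hMr : (0:ℝ) < (M:ℝ) := by exact_mod_cast Nat.lt_of_lt_of_le (by norm_num) hM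
  have hMne : (M:ℝ) ≠ 0 := hMr.ne'
  have hhpos : 0 < h := by rw [hh]; positivity
  have hhne : h ≠ 0 := hhpos.ne'
  have hτne : τ ≠ 0 := hτ.ne'
  have hM2r : (2:ℝ) ≤ (M:ℝ) := by exact_mod_cast hM
  have hhalf : h ≤ 1/2 := by
    rw [hh]
    rw [div_le_div_iff₀ hMr (by norm_num)]
    linarith
  set D : ℕ → ℝ := fun i => (i:ℝ) * h * (1 - (i:ℝ) * h) with hD
  set dmin : ℝ := h * (1 - h) with hdmin_def
  have hdmin : 0 < dmin := by
    rw [hdmin_def]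
    have : h < 1 := lt_of_le_of_lt hhalf (by norm_num)
    nlinarith
  have hD0 : D 0 = 0 := by simp [hD]
  have hMh : (M:ℝ) * h = 1 := by rw [hh]; field_simp
  have hDM : D M = 0 := by simp [hD, hMh]
  have hDlb : ∀ i ∈ Finset.Icc 1 (M-1), dmin ≤ D i := by
    intro i hi
    simp only [Finset.mem_Icc] at hi
    have hx1 : h ≤ (i:ℝ) * h := by
      nlinarith [show (1:ℝ) ≤ (i:ℝ) by exact_mod_cast hi.1]
    have hx2 : (i:ℝ) * h ≤ 1 - h := by
      have : (i:ℝ) + 1 ≤ (M:ℝ) := by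
        have : i + 1 ≤ M := by omega
        exact_mod_cast this
      nlinarith
    simp only [hD, hdmin_def]
    nlinarith [mul_nonneg (sub_nonneg.2 hx1) (sub_nonneg.2 hx2)]
  set c : ℝ := τ / h^2 with hc_def
  have hc : 0 < c := by rw [hc_def]; positivity
  -- the scheme in divergence form
  have hstep : ∀ n, ∀ i ∈ Finset.Icc 1 (M-1),
      f (n+1) i - f n i
        = c * (D (i+1) * f (n+1) (i+1) - 2 * (D i * f (n+1) i)
            + D (i-1) * f (n+1) (i-1)) := by
    intro n i hi
    simp only [Finset.mem_Icc] at hi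
    have h1 := heq n i hi.1 hi.2
    have e1 : ((i+1:ℕ):ℝ) = (i:ℝ) + 1 := by push_cast; ring
    have e2 : ((i-1:ℕ):ℝ) = (i:ℝ) - 1 := by
      have := Nat.cast_sub (R := ℝ) hi.1
      simpa using this
    have h2 : (f (n+1) i - f n i) / τ
        = (((i:ℝ)+1) * h * (1 - ((i:ℝ)+1) * h) * f (n+1) (i+1)
            - 2 * ((i:ℝ) * h * (1 - (i:ℝ) * h)) * f (n+1) i
            + (((i:ℝ)-1) * h * (1 - ((i:ℝ)-1) * h)) * f (n+1) (i-1)) / h^2 := by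
      linarith [h1]
    have h3 := (div_eq_iff hτne).mp h2
    simp only [hD, hc_def, e1, e2]
    rw [h3]
    ring
  set E : ℕ → ℝ := fun n => ∑ i ∈ Finset.Icc 1 (M-1), D i * (f n i)^2 with hE
  have hEnn : ∀ n, 0 ≤ E n := fun n => Finset.sum_nonneg fun i hi =>
    mul_nonneg (hdmin.le.trans (hDlb i hi)) (sq_nonneg _)
  set κ : ℝ := 2*c*dmin/(M:ℝ)^2 with hκ_def
  have hκ : 0 < κ := by rw [hκ_def]; positivity
  have hone : (0:ℝ) < 1 + κ := by linarith
  set r : ℝ := 1 / (1 + κ) with hr_def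
  have hr0 : 0 < r := by rw [hr_def]; positivity
  have hr1 : r < 1 := by
    rw [hr_def, div_lt_one hone]
    linarith
  have hdecay : ∀ n, E (n+1) ≤ r * E n := by
    intro n
    have := step_est' M hM1 c dmin hc hdmin D hD0 hDM hDlb (f n) (f (n+1))
      (hstep n)
    have h2 : (1 + κ) * E (n+1) ≤ E n := by rw [hκ_def]; exact this
    rw [hr_def, one_div, ← div_eq_inv_mul, le_div_iff₀ hone]
    nlinarith [h2]
  have hgeo : ∀ n, E n ≤ E 0 * r^n := by
    intro n
    induction n with
    | zero => simp
    | succ n ih =>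
        calc E (n+1) ≤ r * E n := hdecay n
          _ ≤ r * (E 0 * r^n) := mul_le_mul_of_nonneg_left ih hr0.le
          _ = E 0 * r^(n+1) := by ring
  have hEtend : Tendsto E atTop (𝓝 0) := by
    have hlim : Tendsto (fun n => E 0 * r^n) atTop (𝓝 0) := by
      have := tendsto_pow_atTop_nhds_zero_of_lt_one hr0.le hr1
      simpa using this.const_mul (E 0)
    exact squeeze_zero hEnn hgeo hlim
  intro i hi1 hi2
  have hmem : i ∈ Finset.Icc 1 (M-1) := Finset.mem_Icc.mpr ⟨hi1, hi2⟩
  have hDi : 0 < D i := lt_of_lt_of_le hdmin (hDlb i hmem)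
  have hterm : ∀ n, D i * (f n i)^2 ≤ E n := by
    intro n
    exact Finset.single_le_sum
      (fun j hj => mul_nonneg (hdmin.le.trans (hDlb j hj)) (sq_nonneg _)) hmem
  have htermnn : ∀ n, 0 ≤ D i * (f n i)^2 := fun n => by positivity
  have hDtend : Tendsto (fun n => D i * (f n i)^2) atTop (𝓝 0) :=
    squeeze_zero htermnn hterm hEtend
  have hsqtend : Tendsto (fun n => (f n i)^2) atTop (𝓝 0) := by
    have heqf : (fun n => (f n i)^2) = fun n => (1/D i) * (D i * (f n i)^2) := by
      funext n
      field_simp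
    rw [heqf]
    simpa using hDtend.const_mul (1/D i)
  rw [tendsto_zero_iff_abs_tendsto_zero]
  show Tendsto (fun n => |f n i|) atTop (𝓝 0)
  have habs : (fun n => |f n i|) = fun n => Real.sqrt ((f n i)^2) := by
    funext n
    rw [Real.sqrt_sq_eq_abs]
  rw [habs]
  simpa using hsqtend.sqrt
end
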